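/- Let θ = 0, and let ε be a complex number satisfying either Re ε > 0 and ε⁻¹ ∉ ℤ, or Re ε = 0 and Im ε > 0. Define f(m,n) = −n(1+εn)/(1+ε(m+n)), g(m,r) = −(m/2+r)(1+2εr)/(1+2ε(m+r)), h(r,m) = −m(1+εm)/(1+2ε(m+r)), all for integer arguments. Suppose ψ: ℤ×ℤ → ℂ and ρ: ℤ×ℤ → ℂ satisfy, for all m,n,r ∈ ℤ: ψ(m,r) = ρ(r,m); (m−n)ψ(m+n,r) = g(n,r)ψ(m,n+r) − g(m,r)ψ(n,m+r); and (m/2−r)ρ(m+r,n) = h(r,n)ψ(m,n+r) − f(m,n)ρ(r,m+n). Then ψ(m,r) = 0 and ρ(r,m) = 0 for all m,r ∈ ℤ. -/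

import Mathlib

/-- f(m,n) = −n(1+εn)/(1+ε(m+n)) -/
noncomputable def vf (ε m n : ℂ) : ℂ := -n * (1 + ε * n) / (1 + ε * (m + n))

/-- g(m,r) = −(m/2+r)(1+2εr)/(1+2ε(m+r)) -/
noncomputable def vg (ε m r : ℂ) : ℂ :=
  -(m / 2 + r) * (1 + 2 * ε * r) / (1 + 2 * ε * (m + r))

/-- h(r,m) = −m(1+εm)/(1+2ε(m+r)) -/
noncomputable def vh (ε r m : ℂ) : ℂ := -m * (1 + ε * m) / (1 + 2 * ε * (m + r))

/-
Specialising (4.9) to n = 0 gives (m + r) ψ(m,r) = -g(m,r) ψ(0,m+r), and (4.10) at m = n = 0 gives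
r ψ(0,r) = 0 once ρ is eliminated through ψ(m,r) = ρ(r,m). Together with ψ(0,0) = 0 (from the first
identity at (m,r) = (1,-1)) this kills ψ off the antidiagonal m + r = 0. On the antidiagonal, (4.9)
and (4.10) at (m,-m,0) form a 2×2 linear system for ψ(m,-m), ψ(-m,m) with determinant a nonzero
multiple of 3m.
-/

lemma one_add_two_mul_intCast_ne_zero {ε : ℂ} (hε : (∀ k : ℤ, ε⁻¹ ≠ k) ∨ ε.re = 0) (k : ℤ) :
    1 + 2 * ε * k ≠ 0 := by
  intro h
  rcases hε with hinv | hre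
  · refine hinv (-(2 * k)) (inv_eq_of_mul_eq_one_right ?_)
    push_cast
    linear_combination -h
  · simpa [hre] using congrArg Complex.re h

lemma vg_zero_left {ε r : ℂ} (h : 1 + 2 * ε * r ≠ 0) : vg ε 0 r = -r := by
  rw [vg, zero_div, zero_add, mul_div_cancel_right₀ _ h]

section

variable {ε : ℂ} {ψ : ℤ → ℤ → ℂ}

lemma add_mul_psi_eq_neg_vg_mul (hε : ∀ k : ℤ, 1 + 2 * ε * k ≠ 0)
    (h9 : ∀ m n r : ℤ,
      ((m : ℂ) - n) * ψ (m + n) r = vg ε n r * ψ m (n + r) - vg ε m r * ψ n (m + r))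
    (m r : ℤ) : ((m : ℂ) + r) * ψ m r = -(vg ε m r * ψ 0 (m + r)) := by
  have h := h9 m 0 r
  simp only [Int.cast_zero, sub_zero, add_zero, zero_add, vg_zero_left (hε r)] at h
  linear_combination h

lemma psi_zero_zero_eq_zero (hε : ∀ k : ℤ, 1 + 2 * ε * k ≠ 0)
    (h9 : ∀ m n r : ℤ,
      ((m : ℂ) - n) * ψ (m + n) r = vg ε n r * ψ m (n + r) - vg ε m r * ψ n (m + r)) :
    ψ 0 0 = 0 := by
  have hg : vg ε 1 (-1) ≠ 0 := by
    rw [show vg ε 1 (-1) = (1 + 2 * ε * (-1 : ℤ)) / 2 by norm_num [vg]; ring]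
    exact div_ne_zero (hε (-1)) two_ne_zero
  simpa [hg] using add_mul_psi_eq_neg_vg_mul hε h9 1 (-1)

lemma psi_zero_eq_zero
    (h10 : ∀ m n r : ℤ,
      ((m : ℂ) / 2 - r) * ψ n (m + r) = vh ε r n * ψ m (n + r) - vf ε m n * ψ (m + n) r)
    (h00 : ψ 0 0 = 0) (k : ℤ) : ψ 0 k = 0 := by
  rcases eq_or_ne k 0 with rfl | hk
  · exact h00
  simpa [vh, vf, hk] using h10 0 0 k

lemma psi_eq_zero_of_add_ne_zero (hε : ∀ k : ℤ, 1 + 2 * ε * k ≠ 0)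
    (h9 : ∀ m n r : ℤ,
      ((m : ℂ) - n) * ψ (m + n) r = vg ε n r * ψ m (n + r) - vg ε m r * ψ n (m + r))
    (h0 : ∀ k, ψ 0 k = 0) {m r : ℤ} (hmr : m + r ≠ 0) : ψ m r = 0 := by
  have h := add_mul_psi_eq_neg_vg_mul hε h9 m r
  rw [h0, mul_zero, neg_zero] at h
  exact (mul_eq_zero.mp h).resolve_left (by exact_mod_cast hmr)

lemma psi_self_neg_eq_zero (hε : ∀ k : ℤ, 1 + 2 * ε * k ≠ 0)
    (h9 : ∀ m n r : ℤ,
      ((m : ℂ) - n) * ψ (m + n) r = vg ε n r * ψ m (n + r) - vg ε m r * ψ n (m + r))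
    (h10 : ∀ m n r : ℤ,
      ((m : ℂ) / 2 - r) * ψ n (m + r) = vh ε r n * ψ m (n + r) - vf ε m n * ψ (m + n) r)
    (h00 : ψ 0 0 = 0) (m : ℤ) : ψ m (-m) = 0 := by
  rcases eq_or_ne m 0 with rfl | hm
  · exact h00
  have hp : 1 + 2 * ε * m ≠ 0 := hε m
  have hn : 1 - 2 * ε * m ≠ 0 := by simpa [sub_eq_add_neg] using hε (-m)
  have e9 := h9 m (-m) 0
  have e10 := h10 m (-m) 0
  simp only [vg, vh, vf, add_neg_cancel, add_zero, Int.cast_neg, Int.cast_zero, h00, mul_zero,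
    sub_zero] at e9 e10
  -- With a = ψ(m,-m)/(1-2εm) and b = ψ(-m,m)/(1+2εm), (4.9) says a + b = 0 and (4.10) says
  -- (1+2εm) b = 2(1-εm) a; eliminating b leaves 3a = 0.
  have ha := div_mul_cancel₀ (ψ m (-m)) hn
  have hb := div_mul_cancel₀ (ψ (-m) m) hp
  have hsum : (m : ℂ) * (ψ m (-m) / (1 - 2 * ε * m) + ψ (-m) m / (1 + 2 * ε * m)) = 0 := by
    linear_combination -2 * e9
  have hrel : (m : ℂ) * ((1 + 2 * ε * m) * (ψ (-m) m / (1 + 2 * ε * m))) =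
      (m : ℂ) * (2 * (1 - ε * m) * (ψ m (-m) / (1 - 2 * ε * m))) := by
    linear_combination 2 * e10 + m * hb
  have key : (m : ℂ) * (3 * (ψ m (-m) / (1 - 2 * ε * m))) = 0 := by
    linear_combination (1 + 2 * ε * m) * hsum - hrel
  have : ψ m (-m) / (1 - 2 * ε * m) = 0 := by simpa [hm] using key
  rw [← ha, this, zero_mul]

end

theorem psi_rho_vanish_Ramond (ε : ℂ)
    (hε : (0 < ε.re ∧ ∀ k : ℤ, ε⁻¹ ≠ (k : ℂ)) ∨ (ε.re = 0 ∧ 0 < ε.im))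
    (ψ ρ : ℤ → ℤ → ℂ)
    (hpr : ∀ m r : ℤ, ψ m r = ρ r m)
    (h9 : ∀ m n r : ℤ,
      ((m : ℂ) - (n : ℂ)) * ψ (m + n) r
        = vg ε n r * ψ m (n + r) - vg ε m r * ψ n (m + r))
    (h10 : ∀ m n r : ℤ,
      ((m : ℂ) / 2 - (r : ℂ)) * ρ (m + r) n
        = vh ε r n * ψ m (n + r) - vf ε m n * ρ r (m + n)) :
    ∀ m r : ℤ, ψ m r = 0 ∧ ρ r m = 0 := by
  have hden := one_add_two_mul_intCast_ne_zero (hε.imp And.right And.left)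
  have h10' : ∀ m n r : ℤ, ((m : ℂ) / 2 - r) * ψ n (m + r)
      = vh ε r n * ψ m (n + r) - vf ε m n * ψ (m + n) r := fun m n r => by
    simpa only [hpr] using h10 m n r
  have h00 := psi_zero_zero_eq_zero hden h9
  have h0 := psi_zero_eq_zero h10' h00
  intro m r
  have hψ : ψ m r = 0 := by
    rcases eq_or_ne (m + r) 0 with hmr | hmr
    · obtain rfl : r = -m := by omega
      exact psi_self_neg_eq_zero hden h9 h10' h00 m
    · exact psi_eq_zero_of_add_ne_zero hden h9 h0 hmr
  exact ⟨hψ, hpr m r ▸ hψ⟩
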